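/- Let F be the distribution function of a Borel probability measure on R with infinite right endpoint x_F = infty, and suppose F belongs to the maximum domain of attraction D(G_0) of the Gumbel distribution. Define f(t) = (integral from t to infty of (1 - F(z)) dz) / (1 - F(t)) for t in R. Then the limit as t -> infty of (1 - F(t + f(t))) / (1 - F(t)) equals 1/e. -/

import Mathlib

/-! Write `S = 1 - F`, so that `F ∈ D(G_0)` reads `n S(a_n x + b_n) → e^{-x}`. Let `N t` be
the last index with `b_n ≤ t` and `g t = a_{N t}`. Bracketing `t` between `b_{N t}` and
`b_{N t + 1}`, together with convergence of types (`a_{n+1} / a_n → 1`), shows that `S` is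
`Γ`-varying, `S(t + x g t) / S t → e^{-x}`, and that `g` is self-neighbouring. Iterating
`S(t + g t) ≤ S t / 2` with steps that grow by at most `4/3` gives
`S(t + v g t) ≤ 17 (1 + v²)⁻¹ S t`, so by dominated convergence the mean excess
`f t = ∫_t^∞ S / S t` satisfies `f t / g t → ∫_0^∞ e^{-v} dv = 1`. Since `S` is monotone, `f`
may then replace `g` in the `Γ`-variation limit at `x = 1`. -/

open MeasureTheory Filter Topology Set NNReal

/-- The cumulative distribution function of a Borel probability measure on `ℝ`:
`F(x) = μ((-∞, x])`. -/
noncomputable def distrib (μ : ProbabilityMeasure ℝ) (x : ℝ) : ℝ :=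
  (μ (Set.Iic x) : ℝ≥0)

/-- The generalized extreme value distribution function `G_γ`, with
`G_γ(x) = exp(-(1+γx)^(-1/γ))` where `1 + γx > 0` (interpreted as
`G_0(x) = exp(-e^(-x))` when `γ = 0`). -/
noncomputable def evCdf (γ : ℝ) (x : ℝ) : ℝ :=
  if γ = 0 then Real.exp (-Real.exp (-x))
  else if 0 < 1 + γ * x then Real.exp (-(1 + γ * x) ^ (-1 / γ))
  else if 0 < γ then 0 else 1

/-- `μ` belongs to the maximum domain of attraction `D(G_γ)`: there are `a n > 0` and `b n`
such that `(F (a n * x + b n)) ^ n → G_γ x` at every continuity point `x` of `G_γ`. -/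
def MemDomAttr (γ : ℝ) (μ : ProbabilityMeasure ℝ) : Prop :=
  ∃ a b : ℕ → ℝ, (∀ n, 0 < a n) ∧
    ∀ x : ℝ, ContinuousAt (evCdf γ) x →
      Tendsto (fun n : ℕ => distrib μ (a n * x + b n) ^ n) atTop (𝓝 (evCdf γ x))

/-- The right endpoint `x_F = sup {x : F x < 1}` of a distribution, as an extended real. -/
noncomputable def rightEndpoint (μ : ProbabilityMeasure ℝ) : EReal :=
  sSup ((fun x : ℝ => (x : EReal)) '' {x : ℝ | distrib μ x < 1})

open Real

theorem tendsto_of_antitone_of_tendsto_apply {ι : Type*} {l : Filter ι} {h : ι → ℝ → ℝ}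
    {φ : ℝ → ℝ} (hh : ∀ i, Antitone (h i)) (hφ : StrictAnti φ)
    (hlim : ∀ x, Tendsto (fun i => h i x) l (𝓝 (φ x))) {u : ι → ℝ} {x₀ : ℝ}
    (hu : Tendsto (fun i => h i (u i)) l (𝓝 (φ x₀))) : Tendsto u l (𝓝 x₀) := by
  refine tendsto_order.2 ⟨fun y hy => ?_, fun y hy => ?_⟩
  · obtain ⟨c, hxc, hcy⟩ := exists_between (hφ hy)
    filter_upwards [hu.eventually (gt_mem_nhds hxc), (hlim y).eventually (lt_mem_nhds hcy)]
      with i hui hyi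
    by_contra! hle
    exact (hui.trans hyi).not_ge (hh i hle)
  · obtain ⟨c, hyc, hcx⟩ := exists_between (hφ hy)
    filter_upwards [hu.eventually (lt_mem_nhds hcx), (hlim y).eventually (gt_mem_nhds hyc)]
      with i hui hyi
    by_contra! hle
    exact (hyi.trans hui).not_ge (hh i hle)

theorem tendsto_apply_of_antitone_of_tendsto {ι : Type*} {l : Filter ι} {h : ι → ℝ → ℝ}
    {φ : ℝ → ℝ} {x₀ : ℝ} (hh : ∀ i, Antitone (h i)) (hφ : ContinuousAt φ x₀)
    (hlim : ∀ x, Tendsto (fun i => h i x) l (𝓝 (φ x))) {u : ι → ℝ}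
    (hu : Tendsto u l (𝓝 x₀)) : Tendsto (fun i => h i (u i)) l (𝓝 (φ x₀)) := by
  refine tendsto_order.2 ⟨fun c hc => ?_, fun c hc => ?_⟩
  · obtain ⟨y, hcy, hxy⟩ := ((hφ.eventually (lt_mem_nhds hc)).filter_mono nhdsWithin_le_nhds
      |>.and (self_mem_nhdsWithin (s := Ioi x₀))).exists
    filter_upwards [hu.eventually (gt_mem_nhds hxy), (hlim y).eventually (lt_mem_nhds hcy)]
      with i hui hyi
    exact hyi.trans_le (hh i hui.le)
  · obtain ⟨y, hcy, hxy⟩ := ((hφ.eventually (gt_mem_nhds hc)).filter_mono nhdsWithin_le_nhds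
      |>.and (self_mem_nhdsWithin (s := Iio x₀))).exists
    filter_upwards [hu.eventually (lt_mem_nhds hxy), (hlim y).eventually (gt_mem_nhds hcy)]
      with i hui hyi
    exact (hh i hui.le).trans_lt hyi

theorem tendsto_natCast_mul_one_sub_of_tendsto_pow {F : ℕ → ℝ} (hF₀ : ∀ n, 0 ≤ F n)
    {G : ℝ} (hG : 0 < G) (h : Tendsto (fun n => F n ^ n) atTop (𝓝 G)) :
    Tendsto (fun n : ℕ => (n : ℝ) * (1 - F n)) atTop (𝓝 (-log G)) := by
  have hpos : ∀ᶠ n in atTop, 0 < F n := by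
    filter_upwards [h.eventually (lt_mem_nhds hG), eventually_ne_atTop 0] with n hn hn₀
    exact (hF₀ n).lt_of_ne fun h0 => by simp [← h0, hn₀] at hn
  have hlog : Tendsto (fun n : ℕ => -((n : ℝ) * log (F n))) atTop (𝓝 (-log G)) := by
    refine ((continuousAt_log hG.ne').tendsto.comp h).neg.congr fun n => ?_
    simp [Real.log_pow]
  have hF : Tendsto F atTop (𝓝 1) := by
    have hlogF : Tendsto (fun n : ℕ => log (F n)) atTop (𝓝 0) := by
      have := (hlog.neg.mul (tendsto_inv_atTop_nhds_zero_nat (𝕜 := ℝ)))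
      rw [mul_zero] at this
      refine this.congr' ?_
      filter_upwards [eventually_ne_atTop 0] with n hn
      field_simp
    have := (continuous_exp.tendsto 0).comp hlogF
    rw [exp_zero] at this
    refine this.congr' ?_
    filter_upwards [hpos] with n hn using exp_log hn
  have hlower := hF.mul hlog
  rw [one_mul] at hlower
  refine tendsto_of_tendsto_of_tendsto_of_le_of_le' hlower hlog ?_ ?_
  · filter_upwards [hpos] with n hn
    have hlow : F n - 1 ≤ F n * log (F n) := by
      calc F n - 1 = F n * (1 - (F n)⁻¹) := by field_simp
        _ ≤ F n * log (F n) := mul_le_mul_of_nonneg_left (one_sub_inv_le_log_of_pos hn) hn.le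
    nlinarith [mul_le_mul_of_nonneg_left hlow (Nat.cast_nonneg (α := ℝ) n)]
  · filter_upwards [hpos] with n hn
    nlinarith [log_le_sub_one_of_pos hn, Nat.cast_nonneg (α := ℝ) n]

theorem integral_Ioi_eq_mul_integral_Ioi_zero (S : ℝ → ℝ) (t : ℝ) {c : ℝ} (hc : 0 < c) :
    ∫ z in Ioi t, S z = c * ∫ v in Ioi 0, S (t + v * c) := by
  have htrans : ∫ v in Ioi 0, S (t + v) = ∫ z in Ioi t, S z := by
    simpa using (measurePreserving_add_left volume t).setIntegral_preimage_emb
      (measurableEmbedding_addLeft t) S (Ioi t)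
  rw [integral_comp_mul_right_Ioi (fun v => S (t + v)) 0 hc, zero_mul, htrans, smul_eq_mul,
    mul_inv_cancel_left₀ hc.ne']

theorem le_half_pow_mul_of_halving {S g : ℝ → ℝ} {T : ℝ} (hanti : Antitone S)
    (hg : ∀ t ≥ T, 0 ≤ g t) (hhalf : ∀ t ≥ T, S (t + g t) ≤ S t / 2)
    (hstep : ∀ t ≥ T, g (t + g t) ≤ 4 / 3 * g t) (k : ℕ) :
    ∀ t ≥ T, S (t + 3 * ((4 / 3) ^ k - 1) * g t) ≤ (1 / 2) ^ k * S t := by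
  induction k with
  | zero => simp
  | succ k ih =>
    intro t ht
    have hσ : 0 ≤ 3 * ((4 / 3 : ℝ) ^ k - 1) := by
      have := one_le_pow₀ (by norm_num : (1 : ℝ) ≤ 4 / 3) (n := k)
      linarith
    have ht' : T ≤ t + g t := by linarith [hg t ht]
    -- `σ k = 3 ((4/3)^k - 1)` solves `σ (k + 1) = 1 + 4/3 σ k`: a first step of length `g t`
    -- halves `S`, after which all step lengths are scaled by at most `4/3`
    calc S (t + 3 * ((4 / 3) ^ (k + 1) - 1) * g t)
        ≤ S (t + g t + 3 * ((4 / 3) ^ k - 1) * g (t + g t)) := by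
          apply hanti
          have := mul_le_mul_of_nonneg_left (hstep t ht) hσ
          rw [pow_succ]
          nlinarith
      _ ≤ (1 / 2) ^ k * S (t + g t) := ih _ ht'
      _ ≤ (1 / 2) ^ (k + 1) * S t := by
          rw [pow_succ, mul_assoc]
          gcongr
          linarith [hhalf t ht]

theorem le_inv_one_add_sq_mul_of_halving {S g : ℝ → ℝ} {T : ℝ} (hanti : Antitone S)
    (hS₀ : ∀ t, 0 ≤ S t) (hg : ∀ t ≥ T, 0 ≤ g t) (hhalf : ∀ t ≥ T, S (t + g t) ≤ S t / 2)
    (hstep : ∀ t ≥ T, g (t + g t) ≤ 4 / 3 * g t) {t : ℝ} (ht : T ≤ t) {v : ℝ} (hv : 0 ≤ v) :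
    S (t + v * g t) ≤ 17 * (1 + v ^ 2)⁻¹ * S t := by
  obtain ⟨k, hkv, hvk⟩ := exists_nat_pow_near (by linarith : 1 ≤ 1 + v / 3)
    (by norm_num : (1 : ℝ) < 4 / 3)
  have hgeom : (1 + v ^ 2) * (1 / 2) ^ k ≤ 17 := by
    have h43 : ((4 : ℝ) / 3) ^ 2 ≤ 2 := by norm_num
    have hsq : v ^ 2 ≤ 16 * 2 ^ k := by
      have : v ≤ 4 * (4 / 3) ^ k := by rw [pow_succ] at hvk; linarith
      calc v ^ 2 ≤ (4 * (4 / 3) ^ k) ^ 2 := pow_le_pow_left₀ hv this 2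
        _ = 16 * ((4 / 3) ^ 2) ^ k := by rw [mul_pow, ← pow_mul, pow_mul']; norm_num
        _ ≤ 16 * 2 ^ k := by gcongr
    have h2k : (2 : ℝ) ^ k * (1 / 2) ^ k = 1 := by rw [← mul_pow]; norm_num
    nlinarith [one_le_pow₀ (by norm_num : (1 : ℝ) ≤ 2) (n := k),
      pow_pos (by norm_num : (0 : ℝ) < 1 / 2) k]
  calc S (t + v * g t) ≤ S (t + 3 * ((4 / 3) ^ k - 1) * g t) := by
        apply hanti
        nlinarith [hg t ht]
    _ ≤ (1 / 2) ^ k * S t := le_half_pow_mul_of_halving hanti hg hhalf hstep k t ht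
    _ ≤ 17 * (1 + v ^ 2)⁻¹ * S t := by
        gcongr
        · exact hS₀ t
        · rw [le_mul_inv_iff₀ (by positivity)]
          linarith

theorem tendsto_div_of_tendsto_mul {ι : Type*} {l : Filter ι} {c p q : ι → ℝ} {A B : ℝ}
    (hp : Tendsto (fun i => c i * p i) l (𝓝 A)) (hq : Tendsto (fun i => c i * q i) l (𝓝 B))
    (hB : B ≠ 0) (hc : ∀ᶠ i in l, c i ≠ 0) : Tendsto (fun i => p i / q i) l (𝓝 (A / B)) :=
  (hp.div hq hB).congr' <| by filter_upwards [hc] with i hi using mul_div_mul_left _ _ hi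

theorem tendsto_integral_Ioi_div_div_of_dominated {S g B : ℝ → ℝ} (hanti : Antitone S)
    (hpos : ∀ t, 0 < S t) (hg : ∀ t, 0 < g t)
    (hlim : ∀ x, Tendsto (fun t => S (t + x * g t) / S t) atTop (𝓝 (exp (-x))))
    (hB : IntegrableOn B (Ioi 0))
    (hbound : ∀ᶠ t in atTop, ∀ v > 0, S (t + v * g t) ≤ B v * S t) :
    Tendsto (fun t => (∫ z in Ioi t, S z) / S t / g t) atTop (𝓝 1) := by
  have hdct : Tendsto (fun t => ∫ v in Ioi 0, S (t + v * g t) / S t) atTop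
      (𝓝 (∫ v in Ioi 0, exp (-v))) := by
    refine tendsto_integral_filter_of_dominated_convergence B
      (Eventually.of_forall fun t => ?_) ?_ hB (Eventually.of_forall hlim)
    · refine (Antitone.measurable fun x y hxy =>
        div_le_div_of_nonneg_right (hanti ?_) (hpos t).le).aestronglyMeasurable
      gcongr
      exact (hg t).le
    · filter_upwards [hbound] with t ht
      refine (ae_restrict_iff' measurableSet_Ioi).2 (Eventually.of_forall fun v hv => ?_)
      rw [Real.norm_of_nonneg (div_pos (hpos _) (hpos t)).le, div_le_iff₀ (hpos t)]
      exact ht v hv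
  rw [integral_exp_neg_Ioi_zero] at hdct
  refine hdct.congr fun t => ?_
  rw [integral_Ioi_eq_mul_integral_Ioi_zero S t (hg t), mul_div_assoc,
    mul_div_cancel_left₀ _ (hg t).ne', integral_div]

/-- The largest `n` with `b n ≤ t`; meaningful when `b → ∞` and `b 0 ≤ t` (otherwise `0`). -/
noncomputable def lastIndexLE (b : ℕ → ℝ) (t : ℝ) : ℕ :=
  sSup {n | b n ≤ t}

section lastIndexLE

variable {b : ℕ → ℝ}

theorem bddAbove_setOf_le_of_tendsto (hb : Tendsto b atTop atTop) (t : ℝ) :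
    BddAbove {n | b n ≤ t} := by
  obtain ⟨m, hm⟩ := eventually_atTop.1 (hb.eventually_gt_atTop t)
  exact ⟨m, fun n hn => not_lt.1 fun hmn => (hm n hmn.le).not_ge hn⟩

theorem apply_lastIndexLE_le (hb : Tendsto b atTop atTop) {t : ℝ} (ht : b 0 ≤ t) :
    b (lastIndexLE b t) ≤ t :=
  Nat.sSup_mem ⟨0, ht⟩ (bddAbove_setOf_le_of_tendsto hb t)

theorem lt_apply_lastIndexLE_add_one (hb : Tendsto b atTop atTop) (t : ℝ) :
    t < b (lastIndexLE b t + 1) :=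
  not_le.1 fun h =>
    (le_csSup (bddAbove_setOf_le_of_tendsto hb t) h).not_gt (Nat.lt_succ_self _)

theorem tendsto_lastIndexLE (hb : Tendsto b atTop atTop) :
    Tendsto (lastIndexLE b) atTop atTop :=
  tendsto_atTop.2 fun m => (eventually_ge_atTop (b m)).mono fun _ ht =>
    le_csSup (bddAbove_setOf_le_of_tendsto hb _) ht

end lastIndexLE

/-- The tail form `n (1 - F (a n * x + b n)) → e^{-x}` of the Gumbel limit, with `S = 1 - F`. -/
def GumbelTailLimit (S : ℝ → ℝ) (a b : ℕ → ℝ) : Prop :=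
  ∀ x : ℝ, Tendsto (fun n : ℕ => (n : ℝ) * S (a n * x + b n)) atTop (𝓝 (exp (-x)))

namespace GumbelTailLimit

variable {S : ℝ → ℝ} {a b : ℕ → ℝ}

theorem tendsto_natCast_mul (hS : GumbelTailLimit S a b) :
    Tendsto (fun n : ℕ => (n : ℝ) * S (b n)) atTop (𝓝 1) := by
  simpa using hS 0

theorem tendsto_natCast_mul_succ (hS : GumbelTailLimit S a b) (x : ℝ) :
    Tendsto (fun n : ℕ => (n : ℝ) * S (a (n + 1) * x + b (n + 1))) atTop (𝓝 (exp (-x))) := by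
  have := (tendsto_natCast_div_add_atTop (1 : ℝ)).mul ((hS x).comp (tendsto_add_atTop_nat 1))
  rw [one_mul] at this
  refine this.congr fun n => ?_
  simp only [Function.comp_apply, Nat.cast_add, Nat.cast_one]
  field_simp

theorem tendsto_centering_atTop (hS : GumbelTailLimit S a b) (hanti : Antitone S)
    (hpos : ∀ t, 0 < S t) :
    Tendsto b atTop atTop := by
  have hSb : Tendsto (fun n => S (b n)) atTop (𝓝 0) := by
    have := hS.tendsto_natCast_mul.mul (tendsto_inv_atTop_nhds_zero_nat (𝕜 := ℝ))
    rw [mul_zero] at this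
    refine this.congr' ?_
    filter_upwards [eventually_ne_atTop 0] with n hn
    field_simp
  exact Filter.tendsto_atTop.2 fun t => (hSb.eventually (gt_mem_nhds (hpos t))).mono
    fun n hn => not_lt.1 fun hnt => (hanti hnt.le).not_gt hn

/-- Convergence of types: index sequences of comparable size have asymptotically equal scales. -/
theorem tendsto_div_scale (hS : GumbelTailLimit S a b) (hanti : Antitone S)
    (ha : ∀ n, 0 < a n) {ι : Type*} {l : Filter ι} {n m : ι → ℕ}
    (hn : Tendsto n l atTop) (hm : Tendsto m l atTop) {r : ℝ} (hr : 0 < r)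
    (hnm : Tendsto (fun i => (n i : ℝ) / m i) l (𝓝 r)) :
    Tendsto (fun i => a (m i) / a (n i)) l (𝓝 1) := by
  set w : ι → ℝ → ℝ := fun i x => (a (m i) * x + b (m i) - b (n i)) / a (n i)
  -- in the normalization of `n i`, the point `w i x` plays the role of `x` for `m i`
  have hw (x : ℝ) : Tendsto (fun i => w i x) l (𝓝 (x - log r)) := by
    refine tendsto_of_antitone_of_tendsto_apply
      (h := fun i y => n i * S (a (n i) * y + b (n i)))
      (fun i y z hyz => ?_) (fun y z hyz => exp_lt_exp.2 (neg_lt_neg hyz))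
      (fun y => (hS y).comp hn) ?_
    · have := ha (n i)
      exact mul_le_mul_of_nonneg_left (hanti (by gcongr)) (Nat.cast_nonneg _)
    · have hlim := hnm.mul ((hS x).comp hm)
      rw [show r * exp (-x) = exp (-(x - log r)) by
        rw [neg_sub, exp_sub, exp_log hr, exp_neg]; ring] at hlim
      refine hlim.congr' ?_
      filter_upwards [hm.eventually (eventually_ne_atTop 0)] with i hi
      simp only [Function.comp_apply, w, mul_div_cancel₀ _ (ha (n i)).ne', sub_add_cancel]
      field_simp
  have := (hw 1).sub (hw 0)
  rw [sub_sub_sub_cancel_right, sub_zero] at this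
  refine this.congr fun i => ?_
  simp only [w]
  ring

theorem tendsto_scale_succ_div (hS : GumbelTailLimit S a b) (hanti : Antitone S)
    (ha : ∀ n, 0 < a n) : Tendsto (fun n => a (n + 1) / a n) atTop (𝓝 1) :=
  hS.tendsto_div_scale hanti ha tendsto_id (tendsto_add_atTop_nat 1) one_pos
    (by exact_mod_cast tendsto_natCast_div_add_atTop (1 : ℝ))

theorem tendsto_lastIndexLE_mul (hS : GumbelTailLimit S a b) (hanti : Antitone S)
    (hpos : ∀ t, 0 < S t) :
    Tendsto (fun t => (lastIndexLE b t : ℝ) * S t) atTop (𝓝 1) := by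
  have hb := hS.tendsto_centering_atTop hanti hpos
  have hN := tendsto_lastIndexLE hb
  have hsucc := (hS.tendsto_natCast_mul_succ 0).comp hN
  simp only [mul_zero, zero_add, neg_zero, exp_zero] at hsucc
  refine tendsto_of_tendsto_of_tendsto_of_le_of_le' hsucc (hS.tendsto_natCast_mul.comp hN)
    (Eventually.of_forall fun t => ?_) ?_
  · exact mul_le_mul_of_nonneg_left (hanti (lt_apply_lastIndexLE_add_one hb t).le)
      (Nat.cast_nonneg _)
  · filter_upwards [eventually_ge_atTop (b 0)] with t ht
    exact mul_le_mul_of_nonneg_left (hanti (apply_lastIndexLE_le hb ht)) (Nat.cast_nonneg _)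

/-- `S` is `Γ`-varying with auxiliary function `t ↦ a (lastIndexLE b t)`. -/
theorem tendsto_div_add_mul_scale (hS : GumbelTailLimit S a b) (hanti : Antitone S)
    (hpos : ∀ t, 0 < S t) (ha : ∀ n, 0 < a n) (x : ℝ) :
    Tendsto (fun t => S (t + x * a (lastIndexLE b t)) / S t) atTop (𝓝 (exp (-x))) := by
  have hb := hS.tendsto_centering_atTop hanti hpos
  set N := lastIndexLE b
  have hN : Tendsto N atTop atTop := tendsto_lastIndexLE hb
  have hN₀ : ∀ᶠ t in atTop, (N t : ℝ) ≠ 0 := by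
    filter_upwards [hN.eventually (eventually_ne_atTop 0)] with t ht using Nat.cast_ne_zero.2 ht
  -- squeeze `t` between `b (N t)` and `b (N t + 1)` and normalize by `N t` on both sides
  have hupper : Tendsto (fun t => S (a (N t) * x + b (N t)) / S (b (N t + 1))) atTop
      (𝓝 (exp (-x))) := by
    have hsucc := (hS.tendsto_natCast_mul_succ 0).comp hN
    simp only [mul_zero, zero_add, neg_zero, exp_zero] at hsucc
    simpa using tendsto_div_of_tendsto_mul ((hS x).comp hN) hsucc one_ne_zero hN₀
  have hlower : Tendsto (fun t =>
      S (a (N t + 1) * (x * a (N t) / a (N t + 1)) + b (N t + 1)) / S (b (N t))) atTop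
      (𝓝 (exp (-x))) := by
    have hratio : Tendsto (fun t => x * a (N t) / a (N t + 1)) atTop (𝓝 x) := by
      have := ((hS.tendsto_scale_succ_div hanti ha).comp hN).inv₀ one_ne_zero
      simpa [mul_div_assoc] using this.const_mul x
    refine tendsto_apply_of_antitone_of_tendsto
      (h := fun t y => S (a (N t + 1) * y + b (N t + 1)) / S (b (N t))) (φ := fun y => exp (-y))
      (fun t y z hyz => ?_) (by fun_prop) (fun y => ?_) hratio
    · have := ha (N t + 1)
      exact div_le_div_of_nonneg_right (hanti (by gcongr)) (hpos _).le
    · simpa using tendsto_div_of_tendsto_mul ((hS.tendsto_natCast_mul_succ y).comp hN)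
        (hS.tendsto_natCast_mul.comp hN) one_ne_zero hN₀
  refine tendsto_of_tendsto_of_tendsto_of_le_of_le' hlower hupper ?_ ?_
  · filter_upwards [eventually_ge_atTop (b 0)] with t ht
    rw [mul_div_cancel₀ _ (ha _).ne']
    refine div_le_div₀ (hpos _).le (hanti ?_) (hpos _) (hanti (apply_lastIndexLE_le hb ht))
    linarith [lt_apply_lastIndexLE_add_one hb t]
  · filter_upwards [eventually_ge_atTop (b 0)] with t ht
    refine div_le_div₀ (hpos _).le (hanti ?_) (hpos _)
      (hanti (lt_apply_lastIndexLE_add_one hb t).le)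
    linarith [apply_lastIndexLE_le hb ht]

/-- The auxiliary function `t ↦ a (lastIndexLE b t)` is self-neighbouring. -/
theorem tendsto_scale_lastIndexLE_add_div (hS : GumbelTailLimit S a b) (hanti : Antitone S)
    (hpos : ∀ t, 0 < S t) (ha : ∀ n, 0 < a n) :
    Tendsto (fun t => a (lastIndexLE b (t + a (lastIndexLE b t))) / a (lastIndexLE b t)) atTop
      (𝓝 1) := by
  have hN := tendsto_lastIndexLE (hS.tendsto_centering_atTop hanti hpos)
  have hshift : Tendsto (fun t => t + a (lastIndexLE b t)) atTop atTop :=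
    tendsto_atTop_mono (fun t => le_add_of_nonneg_right (ha _).le) tendsto_id
  have hNS := hS.tendsto_lastIndexLE_mul hanti hpos
  have hindex : Tendsto
      (fun t => (lastIndexLE b t : ℝ) / lastIndexLE b (t + a (lastIndexLE b t))) atTop
      (𝓝 (exp (-1))) := by
    have := (hNS.div (hNS.comp hshift) one_ne_zero).mul
      (by simpa using hS.tendsto_div_add_mul_scale hanti hpos ha 1)
    rw [div_one, one_mul] at this
    refine this.congr' ?_
    filter_upwards [(hN.comp hshift).eventually (eventually_ne_atTop 0)] with t ht
    have : (lastIndexLE b (t + a (lastIndexLE b t)) : ℝ) ≠ 0 := Nat.cast_ne_zero.2 ht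
    have := hpos t
    have := hpos (t + a (lastIndexLE b t))
    simp only [Pi.div_apply, Function.comp_apply]
    field_simp
  exact hS.tendsto_div_scale hanti ha hN (hN.comp hshift) (exp_pos _) hindex

theorem eventually_le_inv_one_add_sq_mul (hS : GumbelTailLimit S a b) (hanti : Antitone S)
    (hpos : ∀ t, 0 < S t) (ha : ∀ n, 0 < a n) :
    ∀ᶠ t in atTop, ∀ v > 0, S (t + v * a (lastIndexLE b t)) ≤ 17 * (1 + v ^ 2)⁻¹ * S t := by
  set g := fun t => a (lastIndexLE b t)
  have hhalf : ∀ᶠ t in atTop, S (t + g t) ≤ S t / 2 := by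
    have he : exp (-1) < 1 / 2 := by
      rw [exp_neg, inv_lt_comm₀ (exp_pos 1) (by norm_num)]
      linarith [exp_one_gt_d9]
    filter_upwards [(hS.tendsto_div_add_mul_scale hanti hpos ha 1).eventually (gt_mem_nhds he)]
      with t ht
    rw [one_mul, div_lt_iff₀ (hpos t)] at ht
    linarith
  have hstep : ∀ᶠ t in atTop, g (t + g t) ≤ 4 / 3 * g t := by
    filter_upwards [(hS.tendsto_scale_lastIndexLE_add_div hanti hpos ha).eventually
      (gt_mem_nhds (by norm_num : (1 : ℝ) < 4 / 3))] with t ht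
    exact ((div_lt_iff₀ (ha _)).1 ht).le
  obtain ⟨T, hT⟩ := eventually_atTop.1 (hhalf.and hstep)
  exact eventually_atTop.2 ⟨T, fun t ht v hv => le_inv_one_add_sq_mul_of_halving hanti
    (fun t => (hpos t).le) (fun t _ => (ha _).le) (fun t ht => (hT t ht).1)
    (fun t ht => (hT t ht).2) ht hv.le⟩

theorem tendsto_div_add_meanExcess (hS : GumbelTailLimit S a b) (hanti : Antitone S)
    (hpos : ∀ t, 0 < S t) (ha : ∀ n, 0 < a n) :
    Tendsto (fun t => S (t + (∫ z in Ioi t, S z) / S t) / S t) atTop (𝓝 (exp (-1))) := by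
  set g := fun t => a (lastIndexLE b t)
  have hΓ := hS.tendsto_div_add_mul_scale hanti hpos ha
  have hmean : Tendsto (fun t => (∫ z in Ioi t, S z) / S t / g t) atTop (𝓝 1) :=
    tendsto_integral_Ioi_div_div_of_dominated hanti hpos (fun t => ha _) hΓ
      (integrable_inv_one_add_sq.integrableOn.const_mul 17)
      (hS.eventually_le_inv_one_add_sq_mul hanti hpos ha)
  refine (tendsto_apply_of_antitone_of_tendsto (h := fun t x => S (t + x * g t) / S t)
    (φ := fun x => exp (-x)) (fun t x y hxy => div_le_div_of_nonneg_right (hanti ?_) (hpos t).le)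
    (by fun_prop) hΓ hmean).congr fun t => ?_
  · have := ha (lastIndexLE b t)
    gcongr
  · rw [div_mul_cancel₀ _ (ha _).ne']

end GumbelTailLimit

theorem monotone_distrib (μ : ProbabilityMeasure ℝ) : Monotone (distrib μ) :=
  fun _ _ hxy => NNReal.coe_le_coe.2 (μ.apply_mono (Iic_subset_Iic.2 hxy))

theorem distrib_lt_one_of_rightEndpoint_eq_top {μ : ProbabilityMeasure ℝ}
    (hend : rightEndpoint μ = ⊤) (x : ℝ) : distrib μ x < 1 := by
  by_contra! hx
  have : rightEndpoint μ ≤ x := sSup_le <| by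
    rintro _ ⟨y, hy, rfl⟩
    exact EReal.coe_le_coe_iff.2 (not_lt.1 fun hxy => (hy.trans_le (hx.trans
      (monotone_distrib μ hxy.le))).false)
  exact EReal.coe_ne_top x (top_le_iff.1 (hend ▸ this))

theorem MemDomAttr.exists_gumbelTailLimit {μ : ProbabilityMeasure ℝ} (h : MemDomAttr 0 μ) :
    ∃ a b : ℕ → ℝ, (∀ n, 0 < a n) ∧ GumbelTailLimit (fun t => 1 - distrib μ t) a b := by
  obtain ⟨a, b, ha, hconv⟩ := h
  have hG (x : ℝ) : evCdf 0 x = exp (-exp (-x)) := if_pos rfl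
  refine ⟨a, b, ha, fun x => ?_⟩
  have hlim := tendsto_natCast_mul_one_sub_of_tendsto_pow (fun n => NNReal.coe_nonneg _)
    (exp_pos _) (hG x ▸ hconv x (by rw [funext hG]; fun_prop))
  rwa [log_exp, neg_neg] at hlim

/-- If `F` has infinite right endpoint and belongs to the maximum domain of attraction of
the Gumbel distribution `G_0`, and `f t = (∫_t^∞ (1 - F z) dz) / (1 - F t)`, then
`(1 - F (t + f t)) / (1 - F t) → 1/e` as `t → ∞`. -/
theorem gumbel_domain_auxiliary_limit (μ : ProbabilityMeasure ℝ)
    (hend : rightEndpoint μ = ⊤) (h : MemDomAttr 0 μ)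
    (f : ℝ → ℝ)
    (hf : ∀ t : ℝ, f t = (∫ z in Set.Ioi t, (1 - distrib μ z)) / (1 - distrib μ t)) :
    Tendsto (fun t : ℝ => (1 - distrib μ (t + f t)) / (1 - distrib μ t)) atTop
      (𝓝 (1 / Real.exp 1)) := by
  obtain ⟨a, b, ha, hS⟩ := h.exists_gumbelTailLimit
  have hanti : Antitone fun t => 1 - distrib μ t := fun _ _ hxy =>
    sub_le_sub_left (monotone_distrib μ hxy) 1
  have hpos (t : ℝ) : 0 < 1 - distrib μ t :=
    sub_pos.2 (distrib_lt_one_of_rightEndpoint_eq_top hend t)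
  rw [one_div, ← exp_neg]
  simpa only [hf] using hS.tendsto_div_add_meanExcess hanti hpos ha
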